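/- arXiv:1412.0308 — 3 statements merged into one kernel-verified Lean document; each statement's English description precedes it below -/
import Mathlib

section
/- Let a and b be integers with 0 < a < b and gcd(a, b) = 1, and let K = {0, a, b}. Then K is b-arithmetic in ℤ (i.e. the system A(K) has a nontrivial bounded complex solution) if and only if the cyclotomic polynomial Φ_3(X) = 1 + X + X² divides the mask polynomial P_K(X) = 1 + X^a + X^b in ℤ[X]. -/
/-!
A solution of `A(K)` lies in the kernel of `P_K(S)`, where `S` is the shift `x ↦ (n ↦ x (n + 1))`.
Factor `P_K` over `ℂ`: for `‖z‖ ≠ 1` the factor `S - z` is injective on bounded sequences, since a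
nonzero solution of `x (n + 1) = z * x n` grows geometrically in one direction. So a nontrivial
bounded solution exists iff `P_K` has a root `z` on the unit circle, and then `n ↦ z ^ n` is one.
For `K = {0, a, b}` such a root makes `1, z ^ a, z ^ b` three unit vectors summing to zero, which
forces `z ^ a` and `z ^ b` to be primitive cube roots of unity; as `gcd a b = 1`, so is `z`, i.e.
`Φ₃(z) = 0`.
-/

open Polynomial

namespace IntSeq

noncomputable def shift : Module.End ℂ (ℤ → ℂ) where
  toFun x n := x (n + 1)
  map_add' _ _ := rfl
  map_smul' _ _ := rfl

@[simp]
lemma shift_apply (x : ℤ → ℂ) (n : ℤ) : shift x n = x (n + 1) := rfl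

lemma shift_pow_apply (k : ℕ) (x : ℤ → ℂ) (n : ℤ) : (shift ^ k) x n = x (n + k) := by
  induction k generalizing n with
  | zero => simp
  | succ k ih => rw [pow_succ', Module.End.mul_apply, shift_apply, ih]; push_cast; ring_nf

lemma aeval_shift_apply (p : ℂ[X]) (x : ℤ → ℂ) (n : ℤ) :
    aeval shift p x n = ∑ i ∈ Finset.range (p.natDegree + 1), p.coeff i * x (n + i) := by
  simp [aeval_eq_sum_range, LinearMap.sum_apply, Finset.sum_apply, shift_pow_apply]

lemma aeval_shift_sum_X_pow_apply (K : Finset ℕ) (x : ℤ → ℂ) (n : ℤ) :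
    aeval shift (∑ s ∈ K, X ^ s : ℂ[X]) x n = ∑ s ∈ K, x (n + s) := by
  simp [map_sum, LinearMap.sum_apply, Finset.sum_apply, shift_pow_apply]

def IsBounded (x : ℤ → ℂ) : Prop := ∃ M : ℝ, ∀ n, ‖x n‖ ≤ M

namespace IsBounded

variable {x : ℤ → ℂ}

lemma aeval_shift (hx : IsBounded x) (p : ℂ[X]) : IsBounded (aeval shift p x) := by
  obtain ⟨M, hM⟩ := hx
  refine ⟨∑ i ∈ Finset.range (p.natDegree + 1), ‖p.coeff i‖ * M, fun n => ?_⟩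
  rw [aeval_shift_apply]
  refine (norm_sum_le _ _).trans (Finset.sum_le_sum fun i _ => ?_)
  rw [norm_mul]
  exact mul_le_mul_of_nonneg_left (hM _) (norm_nonneg _)

open Filter Topology in
lemma not_hasEigenvector_shift (hx : IsBounded x) {z : ℂ} (hz : ‖z‖ ≠ 1) :
    ¬shift.HasEigenvector z x := by
  intro hv
  obtain ⟨M, hM⟩ := hx
  have hshift (n : ℤ) (k : ℕ) : ‖x (n + k)‖ = ‖z‖ ^ k * ‖x n‖ := by
    rw [← shift_pow_apply k x, hv.pow_apply, Pi.smul_apply, smul_eq_mul, norm_mul, norm_pow]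
  refine hv.2 (funext fun n => ?_)
  rcases hz.lt_or_gt with hlt | hgt
  · have hlim : Tendsto (fun k : ℕ => ‖z‖ ^ k * M) atTop (𝓝 0) := by
      simpa using (tendsto_pow_atTop_nhds_zero_of_lt_one (norm_nonneg z) hlt).mul_const M
    refine norm_le_zero_iff.1 (ge_of_tendsto' hlim fun k => ?_)
    calc ‖x n‖ = ‖z‖ ^ k * ‖x (n - k)‖ := by rw [← hshift, sub_add_cancel]
      _ ≤ ‖z‖ ^ k * M := by gcongr; exact hM _
  · by_contra hne
    have hpos : 0 < ‖x n‖ := norm_pos_iff.2 hne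
    obtain ⟨k, hk⟩ := pow_unbounded_of_one_lt (M / ‖x n‖) hgt
    have := hM (n + k)
    rw [hshift, ← le_div_iff₀ hpos] at this
    linarith

lemma eq_zero_of_aeval_shift_prod_eq_zero (hx : IsBounded x) (s : Multiset ℂ)
    (hs : ∀ z ∈ s, ‖z‖ ≠ 1) (h : aeval shift (s.map (X - C ·)).prod x = 0) : x = 0 := by
  induction s using Multiset.induction_on generalizing x with
  | empty => simpa using h
  | cons z s ih =>
    rw [Multiset.map_cons, Multiset.prod_cons, map_mul, Module.End.mul_apply] at h
    refine ih hx (fun w hw => hs w (Multiset.mem_cons_of_mem hw)) (not_not.1 fun hy => ?_)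
    refine (hx.aeval_shift _).not_hasEigenvector_shift (hs z (Multiset.mem_cons_self z s))
      ⟨Module.End.mem_eigenspace_iff.2 ?_, hy⟩
    simpa [sub_eq_zero] using h

lemma eq_zero_of_aeval_shift_eq_zero (hx : IsBounded x) {p : ℂ[X]} (hp : p ≠ 0)
    (hroots : ∀ z : ℂ, ‖z‖ = 1 → ¬p.IsRoot z) (h : aeval shift p x = 0) : x = 0 := by
  refine hx.eq_zero_of_aeval_shift_prod_eq_zero p.roots
    (fun z hz h1 => hroots z h1 (isRoot_of_mem_roots hz)) ?_
  rw [← C_leadingCoeff_mul_prod_multiset_X_sub_C (IsAlgClosed.card_roots_eq_natDegree (p := p)),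
    map_mul, Module.End.mul_apply, aeval_C] at h
  simpa [leadingCoeff_ne_zero.2 hp] using h

end IsBounded

lemma hasEigenvector_shift_zpow {z : ℂ} (hz : z ≠ 0) :
    shift.HasEigenvector z (fun n : ℤ => z ^ n) := by
  refine ⟨Module.End.mem_eigenspace_iff.2 (funext fun n => ?_), fun h => ?_⟩
  · simp [zpow_add_one₀ hz, mul_comm]
  · simpa using congrFun h 0

lemma exists_bounded_aeval_shift_eq_zero_iff {p : ℂ[X]} (hp : p ≠ 0) :
    (∃ x : ℤ → ℂ, x ≠ 0 ∧ IsBounded x ∧ aeval shift p x = 0) ↔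
      ∃ z : ℂ, ‖z‖ = 1 ∧ p.IsRoot z := by
  constructor
  · rintro ⟨x, hx0, hx, h⟩
    by_contra! hroots
    exact hx0 (hx.eq_zero_of_aeval_shift_eq_zero hp hroots h)
  · rintro ⟨z, hz, hroot⟩
    have hz0 : z ≠ 0 := norm_ne_zero_iff.1 (hz ▸ one_ne_zero)
    refine ⟨_, (hasEigenvector_shift_zpow hz0).2, ⟨1, fun n => by simp [hz]⟩, ?_⟩
    rw [Module.End.aeval_apply_of_hasEigenvector (hasEigenvector_shift_zpow hz0), hroot.eq_zero,
      zero_smul]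

lemma exists_bounded_solution_iff (K : Finset ℕ) (hK : K.Nonempty) :
    (∃ x : ℤ → ℂ, x ≠ 0 ∧ (∃ M : ℝ, ∀ n : ℤ, ‖x n‖ ≤ M) ∧ ∀ n : ℤ, ∑ s ∈ K, x (n + s) = 0) ↔
      ∃ z : ℂ, ‖z‖ = 1 ∧ ∑ s ∈ K, z ^ s = 0 := by
  have hp : (∑ s ∈ K, X ^ s : ℂ[X]) ≠ 0 := by
    obtain ⟨s, hs⟩ := hK
    intro h
    simpa [finsetSum_coeff, coeff_X_pow, hs] using congrArg (coeff · s) h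
  simpa only [IsBounded, IsRoot, eval_finsetSum, eval_pow, eval_X, funext_iff,
    aeval_shift_sum_X_pow_apply, Pi.zero_apply] using exists_bounded_aeval_shift_eq_zero_iff hp

end IntSeq

open ComplexConjugate in
lemma Complex.sq_add_self_add_one_eq_zero_of_one_add_add_eq_zero {u v : ℂ} (hu : ‖u‖ = 1)
    (hv : ‖v‖ = 1) (h : 1 + u + v = 0) : u ^ 2 + u + 1 = 0 := by
  have hu' : u * conj u = 1 := by simp [Complex.mul_conj, Complex.normSq_eq_norm_sq, hu]
  have hv' : v * conj v = 1 := by simp [Complex.mul_conj, Complex.normSq_eq_norm_sq, hv]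
  have hconj : 1 + conj u + conj v = 0 := by simpa using congrArg conj h
  -- `‖1 + u‖ = ‖v‖ = 1` gives `u + conj u = -1`; multiply by `u`.
  linear_combination u * hv' - (u + 1) * hu' - u * conj v * h + u * (1 + u) * hconj

lemma isPrimitiveRoot_three_of_one_add_pow_add_pow_eq_zero {a b : ℕ} (hcop : Nat.Coprime a b)
    {z : ℂ} (hz : ‖z‖ = 1) (h : 1 + z ^ a + z ^ b = 0) : IsPrimitiveRoot z 3 := by
  have hza : ‖z ^ a‖ = 1 := by rw [norm_pow, hz, one_pow]
  have hzb : ‖z ^ b‖ = 1 := by rw [norm_pow, hz, one_pow]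
  have ha := Complex.sq_add_self_add_one_eq_zero_of_one_add_add_eq_zero hza hzb h
  have hb := Complex.sq_add_self_add_one_eq_zero_of_one_add_add_eq_zero hzb hza
    (by linear_combination h)
  have hz3 : z ^ Nat.gcd (3 * a) (3 * b) = 1 := by
    refine pow_gcd_eq_one.2 ⟨?_, ?_⟩
    · rw [pow_mul']; linear_combination (z ^ a - 1) * ha
    · rw [pow_mul']; linear_combination (z ^ b - 1) * hb
  rw [Nat.gcd_mul_left, hcop, mul_one] at hz3
  have hz1 : z ≠ 1 := by rintro rfl; norm_num at h
  rw [← orderOf_eq_prime hz3 hz1]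
  exact IsPrimitiveRoot.orderOf z

lemma Polynomial.cyclotomic_dvd_iff_aeval_eq_zero {K : Type*} [Field K] [CharZero K] {n : ℕ}
    (hn : 0 < n) {z : K} (hz : IsPrimitiveRoot z n)
    (p : ℤ[X]) : cyclotomic n ℤ ∣ p ↔ aeval z p = 0 := by
  rw [cyclotomic_eq_minpoly hz hn, minpoly.isIntegrallyClosed_dvd_iff (hz.isIntegral hn)]

open IntSeq

theorem stmt_4 (a b : ℕ) (ha : 0 < a) (hab : a < b) (hgcd : Nat.gcd a b = 1) :
    (∃ x : ℤ → ℂ, x ≠ 0 ∧ (∃ M : ℝ, ∀ n : ℤ, ‖x n‖ ≤ M) ∧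
        ∀ n : ℤ, ∑ s ∈ ({0, a, b} : Finset ℕ), x (n + (s : ℤ)) = 0) ↔
      Polynomial.cyclotomic 3 ℤ ∣
        (1 + Polynomial.X ^ a + Polynomial.X ^ b : Polynomial ℤ) := by
  have hmask (z : ℂ) : ∑ s ∈ ({0, a, b} : Finset ℕ), z ^ s = 1 + z ^ a + z ^ b := by
    have h0 : 0 ∉ ({a, b} : Finset ℕ) := by
      simp only [Finset.mem_insert, Finset.mem_singleton]; omega
    rw [Finset.sum_insert h0, Finset.sum_pair hab.ne, pow_zero, add_assoc]
  simp only [exists_bounded_solution_iff _ (Finset.insert_nonempty _ _), hmask]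
  constructor
  · rintro ⟨z, hz, h⟩
    rw [cyclotomic_dvd_iff_aeval_eq_zero three_pos
      (isPrimitiveRoot_three_of_one_add_pow_add_pow_eq_zero hgcd hz h)]
    simpa using h
  · intro hdvd
    have hω := Complex.isPrimitiveRoot_exp 3 three_ne_zero
    rw [cyclotomic_dvd_iff_aeval_eq_zero three_pos hω] at hdvd
    exact ⟨_, hω.norm'_eq_one three_ne_zero, by simpa using hdvd⟩
end

section
/- Let a and b be integers with 0 < a < b and gcd(a, b) = 1, and let K = {0, a, b}. Then K is b-arithmetic in ℤ (i.e. the system A(K) has a nontrivial bounded complex solution) if and only if K is a tile of ℤ (i.e. there exists C ⊆ ℤ such that the translates c + K, c ∈ C, are pairwise disjoint and their union is ℤ). -/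
open Polynomial Filter Topology ENNReal

/-! A tiling `C + K = ℤ` gives the bounded solution `x n = #K · 1_C(-n) - 1` of `A(K)`, since every
`m` lies in exactly one translate. Conversely, a bounded solution of a linear recurrence whose
characteristic polynomial has no root on the unit circle vanishes: factor the polynomial over `ℂ`,
and note that a bounded geometric sequence of ratio `r` with `‖r‖ ≠ 1` is zero. So a nontrivial
bounded solution of `A({0, a, b})` gives `z` with `‖z‖ = 1` and `1 + z^a + z^b = 0`; then `z^a`
and `z^b` are the two primitive cube roots of unity, and coprimality forces `z` itself to be one,
whence `3 ∣ a + b`. Finally, if `3 ∣ a + b` and `3 ∤ a`, then `0, a, b` represent the three residues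
mod `3`, so `{0, a, b}` tiles `ℤ` with `C = 3ℤ`. -/

def IsTile (K : Set ℤ) : Prop :=
  ∃ C : Set ℤ, (C.PairwiseDisjoint fun c => (fun s => c + s) '' K) ∧
    ⋃ c ∈ C, (fun s => c + s) '' K = Set.univ

def IsBArithmetic (K : Finset ℤ) : Prop :=
  ∃ x : ℤ → ℂ, x ≠ 0 ∧ (∃ M : ℝ, ∀ n : ℤ, ‖x n‖ ≤ M) ∧ ∀ n : ℤ, ∑ s ∈ K, x (n + s) = 0

section Tiling

open Finset

lemma sum_indicator_sub_eq_one_of_tiling {K : Finset ℤ} {C : Set ℤ}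
    (hdisj : C.PairwiseDisjoint fun c => (fun s => c + s) '' (K : Set ℤ))
    (hcover : ⋃ c ∈ C, (fun s => c + s) '' (K : Set ℤ) = Set.univ) (m : ℤ) :
    ∑ s ∈ K, C.indicator (1 : ℤ → ℂ) (m - s) = 1 := by
  have hm : m ∈ ⋃ c ∈ C, (fun s => c + s) '' (K : Set ℤ) := hcover ▸ Set.mem_univ m
  simp only [Set.mem_iUnion, Set.mem_image, Finset.mem_coe] at hm
  obtain ⟨c, hc, s₀, hs₀, rfl⟩ := hm
  rw [Finset.sum_eq_single s₀, add_sub_cancel_right, Set.indicator_of_mem hc, Pi.one_apply]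
  · intro s hs hne
    refine Set.indicator_of_notMem (fun hc' => hne ?_) _
    have := hdisj.elim_set hc' hc (c + s₀) ⟨s, hs, by ring⟩ ⟨s₀, hs₀, rfl⟩
    omega
  · exact fun h => absurd hs₀ h

lemma isBArithmetic_of_isTile {K : Finset ℤ} (hK : 1 < #K) (hT : IsTile (K : Set ℤ)) :
    IsBArithmetic K := by
  obtain ⟨C, hdisj, hcover⟩ := hT
  set x : ℤ → ℂ := fun n => #K * C.indicator 1 (-n) - 1 with hx
  have hvalues : ∀ n, x n = #K - 1 ∨ x n = -1 := fun n => by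
    by_cases hn : -n ∈ C
    · simp [hx, Set.indicator_of_mem hn]
    · simp [hx, Set.indicator_of_notMem hn]
  refine ⟨x, fun h => ?_, ⟨#K + 1, fun n => ?_⟩, fun n => ?_⟩
  · have hK' : (#K : ℂ) - 1 ≠ 0 := sub_ne_zero.2 (by exact_mod_cast hK.ne')
    rcases hvalues 0 with h0 | h0 <;> rw [h, Pi.zero_apply] at h0
    · exact hK' h0.symm
    · norm_num at h0
  · rcases hvalues n with h0 | h0 <;> rw [h0]
    · exact (norm_sub_le _ _).trans (by simp)
    · simp
  · have := sum_indicator_sub_eq_one_of_tiling hdisj hcover (-n)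
    simp only [hx, sum_sub_distrib, ← mul_sum, neg_add, ← sub_eq_add_neg, this]
    simp

end Tiling

lemma isTile_of_three_dvd_add {a b : ℤ} (h3 : 3 ∣ a + b) (ha : ¬ 3 ∣ a) :
    IsTile {0, a, b} := by
  have ha_mod : a % 3 = 1 ∨ a % 3 = 2 := by omega
  refine ⟨{c | 3 ∣ c}, fun c (hc : 3 ∣ c) c' (hc' : 3 ∣ c') hne => ?_,
    Set.eq_univ_of_forall fun m => ?_⟩
  · refine Set.disjoint_left.2 ?_
    rintro _ ⟨s, hs, rfl⟩ ⟨s', hs', heq : c' + s' = c + s⟩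
    simp only [Set.mem_insert_iff, Set.mem_singleton_iff] at hs hs'
    rcases hs with hs | hs | hs <;> rcases hs' with hs' | hs' | hs' <;> omega
  · simp only [Set.mem_iUnion, Set.mem_image, Set.mem_insert_iff, Set.mem_singleton_iff,
      exists_prop]
    rcases (by omega : 3 ∣ m ∨ 3 ∣ m - a ∨ 3 ∣ m - b) with h | h | h
    · exact ⟨m, h, 0, Or.inl rfl, add_zero m⟩
    · exact ⟨m - a, h, a, Or.inr (Or.inl rfl), sub_add_cancel m a⟩
    · exact ⟨m - b, h, b, Or.inr (Or.inr rfl), sub_add_cancel m b⟩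

noncomputable def shift : Module.End ℂ (ℤ → ℂ) := LinearMap.funLeft ℂ ℂ (· + 1)

lemma shift_apply (x : ℤ → ℂ) (n : ℤ) : shift x n = x (n + 1) := rfl

lemma shift_pow_apply (k : ℕ) (x : ℤ → ℂ) (n : ℤ) : (shift ^ k) x n = x (n + k) := by
  induction k generalizing n with
  | zero => simp
  | succ k ih => rw [pow_succ', Module.End.mul_apply, shift_apply, ih]; push_cast; ring_nf

lemma Memℓp.shift {x : ℤ → ℂ} (hx : Memℓp x ∞) : Memℓp (shift x) ∞ := by
  refine memℓp_infty_iff.2 ((memℓp_infty_iff.1 hx).mono ?_)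
  rintro _ ⟨n, rfl⟩
  exact ⟨n + 1, rfl⟩

lemma eq_zero_of_apply_add_one_eq_mul {r : ℂ} (hr : ‖r‖ ≠ 1) {y : ℤ → ℂ} (hy : Memℓp y ∞)
    (h : ∀ n, y (n + 1) = r * y n) : y = 0 := by
  have hpow : ∀ (k : ℕ) n, y (n + k) = r ^ k * y n := fun k => by
    induction k with
    | zero => simp
    | succ k ih => intro n; rw [Nat.cast_succ, ← add_assoc, h, ih, pow_succ]; ring
  obtain ⟨M, hM⟩ := memℓp_infty_iff.1 hy
  have hM' : ∀ n, ‖y n‖ ≤ M := fun n => hM ⟨n, rfl⟩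
  -- in both cases `‖y n‖ ≤ M q ^ k` for all `k`, with `q = ‖r‖` or `q = ‖r‖⁻¹` in `[0, 1)`
  suffices ∀ n, ∃ q : ℝ, 0 ≤ q ∧ q < 1 ∧ ∀ k : ℕ, ‖y n‖ ≤ M * q ^ k by
    funext n
    obtain ⟨q, hq0, hq1, hbound⟩ := this n
    have hlim := (tendsto_pow_atTop_nhds_zero_of_lt_one hq0 hq1).const_mul M
    rw [mul_zero] at hlim
    exact norm_le_zero_iff.1 (ge_of_tendsto' hlim hbound)
  intro n
  rcases hr.lt_or_gt with hr1 | hr1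
  · refine ⟨‖r‖, norm_nonneg r, hr1, fun k => ?_⟩
    calc ‖y n‖ = ‖r‖ ^ k * ‖y (n - k)‖ := by
          rw [← norm_pow, ← norm_mul, ← hpow, sub_add_cancel]
      _ ≤ M * ‖r‖ ^ k := by rw [mul_comm]; gcongr; exact hM' _
  · have hr0 : 0 < ‖r‖ := one_pos.trans hr1
    refine ⟨‖r‖⁻¹, inv_nonneg.2 hr0.le, inv_lt_one_of_one_lt₀ hr1, fun k => ?_⟩
    rw [inv_pow, ← div_eq_mul_inv, le_div_iff₀ (pow_pos hr0 k), mul_comm, ← norm_pow,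
      ← norm_mul, ← hpow]
    exact hM' _

lemma eq_zero_of_aeval_shift_multiset_prod_eq_zero (s : Multiset ℂ) (hs : ∀ r ∈ s, ‖r‖ ≠ 1)
    {x : ℤ → ℂ} (hx : Memℓp x ∞) (h : aeval shift (s.map (X - C ·)).prod x = 0) : x = 0 := by
  induction s using Multiset.induction_on generalizing x with
  | empty => simpa using h
  | cons r s ih =>
    rw [Multiset.map_cons, Multiset.prod_cons, mul_comm, map_mul, Module.End.mul_apply] at h
    have hrx : aeval shift (X - C r) x = 0 :=
      ih (fun r' hr' => hs r' (Multiset.mem_cons_of_mem hr'))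
        (by simpa using hx.shift.sub (hx.const_smul r)) h
    refine eq_zero_of_apply_add_one_eq_mul (hs r (Multiset.mem_cons_self r s)) hx fun n => ?_
    have := congrFun hrx n
    simp only [map_sub, aeval_X, aeval_C, LinearMap.sub_apply, Module.algebraMap_end_apply,
      Pi.sub_apply, shift_apply, Pi.smul_apply, smul_eq_mul, Pi.zero_apply] at this
    exact sub_eq_zero.1 this

lemma eq_zero_of_aeval_shift_eq_zero {p : ℂ[X]} (hp : p ≠ 0) (hroots : ∀ r, p.IsRoot r → ‖r‖ ≠ 1)
    {x : ℤ → ℂ} (hx : Memℓp x ∞) (h : aeval shift p x = 0) : x = 0 := by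
  rw [← C_leadingCoeff_mul_prod_multiset_X_sub_C (p := p) IsAlgClosed.card_roots_eq_natDegree,
    map_mul, Module.End.mul_apply, aeval_C, Module.algebraMap_end_apply, smul_eq_zero] at h
  exact eq_zero_of_aeval_shift_multiset_prod_eq_zero _
    (fun r hr => hroots r (isRoot_of_mem_roots hr)) hx (h.resolve_left (leadingCoeff_ne_zero.2 hp))

lemma sq_add_self_add_one_eq_zero {u : ℂ} (hu : ‖u‖ = 1) (hu1 : ‖1 + u‖ = 1) :
    u ^ 2 + u + 1 = 0 := by
  have h1 := Complex.mul_conj' u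
  have h2 := Complex.mul_conj' (1 + u)
  rw [hu, Complex.ofReal_one, one_pow] at h1
  rw [hu1, Complex.ofReal_one, one_pow, map_add, map_one] at h2
  linear_combination u * (h2 - h1) - h1

lemma three_dvd_add_of_one_add_pow_add_pow_eq_zero {a b : ℕ} (hab : a.Coprime b) {z : ℂ}
    (hz : ‖z‖ = 1) (h : 1 + z ^ a + z ^ b = 0) : 3 ∣ a + b := by
  have hu : (z ^ a) ^ 2 + z ^ a + 1 = 0 := by
    refine sq_add_self_add_one_eq_zero (by rw [norm_pow, hz, one_pow]) ?_
    rw [show 1 + z ^ a = -z ^ b by linear_combination h, norm_neg, norm_pow, hz, one_pow]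
  have hu3 : (z ^ a) ^ 3 = 1 := by linear_combination (z ^ a - 1) * hu
  have hv : z ^ b = (z ^ a) ^ 2 := by linear_combination h - hu
  have hz3 : z ^ 3 = 1 := by
    have := pow_gcd_eq_one.2 ⟨(pow_mul z a 3).trans hu3,
      (pow_mul z b 3).trans (by rw [hv, ← pow_mul, mul_comm, pow_mul, hu3, one_pow])⟩
    rwa [Nat.gcd_mul_right, hab.gcd_eq_one, one_mul] at this
  have hz1 : z ≠ 1 := by
    rintro rfl
    norm_num at h
  rw [← orderOf_eq_prime hz3 hz1]
  exact orderOf_dvd_of_pow_eq_one (by rw [pow_add, hv, ← pow_succ', hu3])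

lemma three_dvd_add_of_isBArithmetic {a b : ℤ} (ha : 0 < a) (hab : a < b) (hcop : IsCoprime a b)
    (h : IsBArithmetic {0, a, b}) : 3 ∣ a + b := by
  lift a to ℕ using ha.le
  lift b to ℕ using (ha.trans hab).le
  obtain ⟨x, hx0, ⟨M, hM⟩, hsol⟩ := h
  have hp : (1 + X ^ a + X ^ b : ℂ[X]) ≠ 0 := fun h0 => by
    simpa [show a ≠ 0 by omega, show b ≠ 0 by omega] using congrArg (eval 0) h0
  have hrec : aeval shift (1 + X ^ a + X ^ b : ℂ[X]) x = 0 := funext fun n => by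
    have := hsol n
    rw [Finset.sum_insert (by simp only [Finset.mem_insert, Finset.mem_singleton]; omega),
      Finset.sum_insert (by simp only [Finset.mem_singleton]; omega),
      Finset.sum_singleton, add_zero] at this
    simp only [map_add, map_one, aeval_X_pow, LinearMap.add_apply, Module.End.one_apply,
      Pi.add_apply, shift_pow_apply, Pi.zero_apply]
    linear_combination this
  by_contra h3
  refine hx0 (eq_zero_of_aeval_shift_eq_zero hp (fun z hz hz1 => h3 ?_)
    (memℓp_infty_iff.2 ⟨M, Set.forall_mem_range.2 hM⟩) hrec)
  exact_mod_cast three_dvd_add_of_one_add_pow_add_pow_eq_zero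
    (Nat.isCoprime_iff_coprime.1 hcop) hz1 (by simpa using hz)

theorem stmt_7 (a b : ℤ) (ha : 0 < a) (hab : a < b) (hgcd : IsCoprime a b) :
    (∃ x : ℤ → ℂ, x ≠ 0 ∧ (∃ M : ℝ, ∀ n : ℤ, ‖x n‖ ≤ M) ∧
        ∀ n : ℤ, ∑ s ∈ ({0, a, b} : Finset ℤ), x (n + s) = 0) ↔
      ∃ C : Set ℤ, (C.PairwiseDisjoint fun c => (fun s => c + s) '' ({0, a, b} : Set ℤ)) ∧
        ⋃ c ∈ C, (fun s => c + s) '' ({0, a, b} : Set ℤ) = Set.univ := by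
  change IsBArithmetic {0, a, b} ↔ IsTile {0, a, b}
  refine ⟨fun h => ?_, fun h => isBArithmetic_of_isTile ?_ (by simpa using h)⟩
  · have h3 := three_dvd_add_of_isBArithmetic ha hab hgcd h
    refine isTile_of_three_dvd_add h3 fun ha3 => ?_
    have := hgcd.isUnit_of_dvd' ha3 ((dvd_add_right ha3).1 h3)
    norm_num [Int.isUnit_iff] at this
  · exact Finset.one_lt_card.2 ⟨0, by simp, a, by simp, ha.ne⟩
end

section
/- Let k ≥ 2 and r ≥ 2 be integers, let F_k be the free group on k generators, and for g ∈ F_k let |g| denote the length of the reduced word representing g. Then the set B_r \ {1} = {g ∈ F_k : 1 ≤ |g| ≤ r} is not a right tile of F_k: there is no set C ⊆ F_k such that the left translates c·(B_r \ {1}), c ∈ C, are pairwise disjoint and cover F_k. -/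
/-!
Suppose the translates `c • K`, `c ∈ C`, partition the group, where `1 ∉ K`. A centre `c₀ ∈ C`
lies in a tile `c₁ • K` with `c₁ ≠ c₀`, so `c₀ = c₁ * w` with `w ∈ K`; any `h ∈ K` with
`w * h ∈ K` then puts `c₀ * h` in both `c₀ • K` and `c₁ • K`. For `K = B_r \ {1}` in a free
group such an `h` always exists: if `|w| ≥ 2`, cancel the last letter of `w`; if `|w| = 1`,
take `h = w`, since `|w²| = 2 ≤ r`.
-/

def IsRightTile {G : Type*} [Group G] (K : Set G) : Prop :=
  ∃ C : Set G, (C.PairwiseDisjoint fun c => (fun s => c * s) '' K) ∧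
    ⋃ c ∈ C, (fun s => c * s) '' K = Set.univ

theorem not_isRightTile_of_forall_exists_mul_mem {G : Type*} [Group G] {K : Set G}
    (one_notMem : (1 : G) ∉ K) (hK : ∀ w ∈ K, ∃ h ∈ K, w * h ∈ K) : ¬ IsRightTile K := by
  rintro ⟨C, hdisj, hcover⟩
  have hcovered (g : G) : g ∈ ⋃ c ∈ C, (fun s => c * s) '' K := hcover ▸ Set.mem_univ g
  obtain ⟨c₀, hc₀, -⟩ := Set.mem_iUnion₂.mp (hcovered 1)
  obtain ⟨c₁, hc₁, w, hw, rfl⟩ := Set.mem_iUnion₂.mp (hcovered c₀)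
  obtain ⟨h, hh, hwh⟩ := hK w hw
  have hne : c₁ ≠ c₁ * w := fun heq => one_notMem (by rwa [left_eq_mul.mp heq] at hw)
  exact Set.disjoint_left.mp (hdisj hc₁ hc₀ hne) ⟨w * h, hwh, (mul_assoc _ _ _).symm⟩ ⟨h, hh, rfl⟩

namespace FreeGroup

variable {α : Type*} [DecidableEq α]

theorem norm_mk_of_isReduced {L : List (α × Bool)} (hL : IsReduced L) :
    norm (mk L) = L.length := by
  rw [norm, toWord_mk, hL.reduce_eq]

theorem exists_norm_eq_one_mul_eq (x : FreeGroup α) (hx : x ≠ 1) :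
    ∃ u t : FreeGroup α, norm t = 1 ∧ norm u = norm x - 1 ∧ u * t = x := by
  have hne : x.toWord ≠ [] := toWord_eq_nil_iff.not.mpr hx
  refine ⟨mk x.toWord.dropLast, mk [x.toWord.getLast hne], norm_mk_of_isReduced .singleton,
    ?_, ?_⟩
  · rw [norm_mk_of_isReduced (isReduced_toWord.infix (List.dropLast_prefix _).isInfix),
      List.length_dropLast, norm]
  · rw [mul_mk, List.dropLast_append_getLast, mk_toWord]

theorem norm_mul_self_of_norm_eq_one {t : FreeGroup α} (ht : norm t = 1) : norm (t * t) = 2 := by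
  obtain ⟨p, hp⟩ := List.length_eq_one_iff.mp ht
  rw [← mk_toWord (x := t), hp, mul_mk]
  exact norm_mk_of_isReduced (isReduced_cons_cons.mpr ⟨fun _ => rfl, .singleton⟩)

theorem exists_mem_punctured_ball_mul_mem {r : ℕ} (hr : 2 ≤ r) {w : FreeGroup α}
    (hw : 1 ≤ norm w ∧ norm w ≤ r) :
    ∃ h : FreeGroup α, (1 ≤ norm h ∧ norm h ≤ r) ∧ (1 ≤ norm (w * h) ∧ norm (w * h) ≤ r) := by
  obtain ⟨u, t, ht, hu, rfl⟩ := exists_norm_eq_one_mul_eq w (norm_eq_zero.not.mp (by omega))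
  by_cases hu1 : u = 1
  · subst hu1
    rw [one_mul] at hw ⊢
    exact ⟨t, hw, by rw [norm_mul_self_of_norm_eq_one ht]; omega⟩
  · refine ⟨t⁻¹, by rw [norm_inv_eq]; omega, ?_⟩
    rw [mul_inv_cancel_right]
    have := norm_eq_zero.not.mpr hu1
    omega

end FreeGroup

theorem stmt_17_general (k r : ℕ) (hr : 2 ≤ r) :
    ¬ ∃ C : Set (FreeGroup (Fin k)),
        (C.PairwiseDisjoint fun c => (fun s => c * s) ''
          {h : FreeGroup (Fin k) | 1 ≤ FreeGroup.norm h ∧ FreeGroup.norm h ≤ r}) ∧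
        ⋃ c ∈ C, (fun s => c * s) ''
          {h : FreeGroup (Fin k) | 1 ≤ FreeGroup.norm h ∧ FreeGroup.norm h ≤ r} =
          Set.univ :=
  not_isRightTile_of_forall_exists_mul_mem (by simp)
    fun _ hw => FreeGroup.exists_mem_punctured_ball_mul_mem hr hw

theorem stmt_17 (k r : ℕ) (hk : 2 ≤ k) (hr : 2 ≤ r) :
    ¬ ∃ C : Set (FreeGroup (Fin k)),
        (C.PairwiseDisjoint fun c => (fun s => c * s) ''
          {h : FreeGroup (Fin k) | 1 ≤ FreeGroup.norm h ∧ FreeGroup.norm h ≤ r}) ∧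
        ⋃ c ∈ C, (fun s => c * s) ''
          {h : FreeGroup (Fin k) | 1 ≤ FreeGroup.norm h ∧ FreeGroup.norm h ≤ r} =
          Set.univ :=
  stmt_17_general k r hr
end
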